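/- The relation ⊑ on CA^{k,-} defined by: noop is the minimum, and for α = do(φ_A);γ_β and α' = do(φ_{A'});γ_{β'} (reading γ = noop when absent), α ⊐ α' iff (1) A ⊋ A', or (2) A = A' and β ≠ noop and β' = noop, or (3) A = A' and c_β(a) ⊐ c_{β'}(a) for all atoms a — is a strict partial order (irreflexive and transitive) on CA^{k,-}. -/

import Mathlib

noncomputable section

inductive Form (Φ : Type) : Type where
  | tru : Form Φ
  | fls : Form Φ
  | var : Φ → Form Φ
  | neg : Form Φ → Form Φ
  | and : Form Φ → Form Φ → Form Φ
  | or : Form Φ → Form Φ → Form Φ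
deriving DecidableEq

namespace Form
def eval {Φ : Type} (v : Φ → Bool) : Form Φ → Bool
  | tru => true
  | fls => false
  | var p => v p
  | neg φ => !(φ.eval v)
  | and φ ψ => φ.eval v && ψ.eval v
  | or φ ψ => φ.eval v || ψ.eval v

def Valid {Φ : Type} (φ : Form Φ) : Prop := ∀ v, φ.eval v = true
def Equiv {Φ : Type} (φ ψ : Form Φ) : Prop := ∀ v, φ.eval v = ψ.eval v
def imp {Φ : Type} (φ ψ : Form Φ) : Form Φ := .or (.neg φ) ψ
end Form

section Atoms
variable {Φ : Type} [Fintype Φ] [DecidableEq Φ]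

def bigAnd {Φ : Type} (l : List (Form Φ)) : Form Φ := l.foldr .and .tru
def bigOr {Φ : Type} (l : List (Form Φ)) : Form Φ := l.foldr .or .fls

/-- The atom `φ_a` for `a ⊆ Φ`. -/
def atomForm (a : Finset Φ) : Form Φ :=
  .and (bigAnd ((Finset.univ.filter (· ∈ a)).toList.map .var))
       (bigAnd ((Finset.univ.filter (· ∉ a)).toList.map (fun p => .neg (.var p))))

/-- `φ_A`, the disjunction of the atoms in `A`. -/
def disjForm (A : Finset (Finset Φ)) : Form Φ := bigOr (A.toList.map atomForm)

/-- The valuation corresponding to an atom. -/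
def atomVal (a : Finset Φ) : Φ → Bool := fun p => p ∈ a

/-- The set of atoms whose disjunction is equivalent to `φ`. -/
def canonSet (φ : Form Φ) : Finset (Finset Φ) :=
  Finset.univ.filter (fun a => φ.eval (atomVal a) = true)

end Atoms

inductive Act (Φ : Type) : Type where
  | noop : Act Φ
  | doa : Form Φ → Act Φ
  | ite : Form Φ → Act Φ → Act Φ → Act Φ
  | seq : Act Φ → Act Φ → Act Φ
deriving DecidableEq

/-- `HasDepth α k`: α is a depth-`k` action. -/
inductive HasDepth {Φ : Type} : Act Φ → ℕ → Prop where
  | noop : HasDepth .noop 0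
  | up {α k} : HasDepth α k → HasDepth α (k+1)
  | prim {φ} : HasDepth (.doa φ) 1
  | cond {ψ α β k} : HasDepth α (k+1) → HasDepth β (k+1) → HasDepth (.ite ψ α β) (k+1)
  | seq {α β k₁ k₂ m} : HasDepth α k₁ → HasDepth β k₂ → k₁ + k₂ ≤ m → 2 ≤ m →
      HasDepth (.seq α β) m

section Canonical
variable {Φ : Type} [Fintype Φ] [DecidableEq Φ]

/-- A fixed enumeration `a₁, …, a_N` of the atoms. -/
def atomList (Φ : Type) [Fintype Φ] [DecidableEq Φ] : List (Finset Φ) :=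
  (Finset.univ : Finset (Finset Φ)).toList

/-- The nested conditional `if φ_{a₁} then c(a₁) else (… else c(a_N))`,
with trailing `noop`s trimmed. -/
def nestIf (c : Finset Φ → Act Φ) : List (Finset Φ) → Act Φ
  | [] => .noop
  | a :: rest =>
    let r := nestIf c rest
    if c a = .noop ∧ r = .noop then .noop else .ite (atomForm a) (c a) r

/-- The canonical action determined by a canonical map `c`. -/
def gammaOf (c : Finset Φ → Act Φ) : Act Φ := nestIf c (atomList Φ)

def fuelOf {Φ : Type} : Act Φ → ℕ
  | .noop => 1
  | .doa _ => 1
  | .ite _ α β => max (fuelOf α) (fuelOf β)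
  | .seq α β => fuelOf α + fuelOf β

/-- Fueled canonical map. -/
def cmapF : ℕ → Act Φ → Finset Φ → Act Φ
  | _, .noop, _ => .noop
  | _, .doa φ, _ => .doa (disjForm (canonSet φ))
  | n, .ite ψ α β, a => if ψ.eval (atomVal a) = true then cmapF n α a else cmapF n β a
  | 0, .seq _ _, _ => .noop
  | (n+1), .seq α β, a =>
    match cmapF (n+1) α a with
    | .noop => cmapF (n+1) β a
    | .doa ψ => .seq (.doa ψ) (gammaOf (fun b => cmapF n β b))
    | .seq (.doa ψ) γ => .seq (.doa ψ) (gammaOf (fun b => cmapF n (.seq γ β) b))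
    | _ => .noop
  termination_by n α _ => (n, sizeOf α)

/-- The canonical map `c_α`. -/
def cmap (α : Act Φ) : Finset Φ → Act Φ := cmapF (fuelOf α) α

/-- The canonical action `γ_α`. -/
def gammaAct (α : Act Φ) : Act Φ := gammaOf (cmap α)

/-- `F̃ = {φ_A : ∃ φ ∈ F, ⊨ φ_A ↔ φ}`. -/
def FTilde (F : Finset (Form Φ)) : Set (Form Φ) :=
  {ψ | ∃ A : Finset (Finset Φ), ψ = disjForm A ∧ ∃ φ ∈ F, Form.Equiv (disjForm A) φ}

/-- `CA^{k,-}`: depth-`k` actions of the form `noop`, `do(φ_A)`, or `do(φ_A);γ_β`. -/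
def CAminus (F : Finset (Form Φ)) (k : ℕ) : Set (Act Φ) :=
  {α | HasDepth α k ∧
    (α = .noop ∨
     (∃ A : Finset (Finset Φ), α = .doa (disjForm A) ∧ disjForm A ∈ FTilde F) ∨
     (∃ (A : Finset (Finset Φ)) (β : Act Φ),
        α = .seq (.doa (disjForm A)) (gammaAct β) ∧ disjForm A ∈ FTilde F ∧
        HasDepth β (k-1)))}


/-- `CA^{k,-}` (with `do(φ_A);noop` written as `do(φ_A)`). -/
def CAminusI (F : Finset (Form Φ)) (k : ℕ) : Set (Act Φ) :=
  {α | HasDepth α k ∧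
    (α = .noop ∨
     (∃ A : Finset (Finset Φ), α = .doa (disjForm A) ∧ disjForm A ∈ FTilde F) ∨
     (∃ (A : Finset (Finset Φ)) (β : Act Φ),
        α = .seq (.doa (disjForm A)) (gammaAct β) ∧ disjForm A ∈ FTilde F ∧
        HasDepth β (k-1) ∧ gammaAct β ≠ .noop))}

end Canonical


section
variable {Φ : Type} [Fintype Φ] [DecidableEq Φ]

/-- The head `A` of an element of `CA^{k,-}` (as a set of atoms). -/
def headSet : Act Φ → Finset (Finset Φ)
  | .doa φ => canonSet φ
  | .seq (.doa φ) _ => canonSet φ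
  | _ => ∅

/-- The tail `γ_β` of an element of `CA^{k,-}` (`noop` when absent). -/
def tailAct : Act Φ → Act Φ
  | .seq (.doa _) γ => γ
  | _ => .noop

/-- Fueled version of the strict order `⊐` on `CA^{k,-}`. -/
def CAgtF : ℕ → Act Φ → Act Φ → Prop
  | 0, _, _ => False
  | (n+1), α, α' =>
      (α ≠ .noop ∧ α' = .noop) ∨
      (α ≠ .noop ∧ α' ≠ .noop ∧
        (headSet α' ⊂ headSet α ∨
         (headSet α = headSet α' ∧ tailAct α ≠ .noop ∧ tailAct α' = .noop) ∨
         (headSet α = headSet α' ∧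
           ∀ a : Finset Φ, CAgtF n (cmap (tailAct α) a) (cmap (tailAct α') a))))

/-- The strict order `⊐`: `noop` is the minimum; for `α = do(φ_A);γ_β` and
`α' = do(φ_{A'});γ_{β'}`, `α ⊐ α'` iff `A ⊋ A'`, or `A = A'` with `β ≠ noop`
and `β' = noop`, or `A = A'` and `c_β(a) ⊐ c_{β'}(a)` for all atoms `a`. -/
def CAgt (α α' : Act Φ) : Prop := ∃ n, CAgtF n α α'

end

/-! `CAgtF n` is monotone in the fuel `n`, so two instances of `⊐` can be compared at a
common fuel, where irreflexivity and transitivity follow by induction on the fuel. -/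

section StrictOrder
variable {Φ : Type} [Fintype Φ] [DecidableEq Φ]

lemma cmap_noop (a : Finset Φ) : cmap (.noop : Act Φ) a = .noop := by
  simp [cmap, fuelOf, cmapF]

lemma CAgtF.ne_noop : ∀ {n : ℕ} {α α' : Act Φ}, CAgtF n α α' → α ≠ .noop
  | 0, _, _, h => h.elim
  | _ + 1, _, _, h => by rcases h with ⟨h, _⟩ | ⟨h, _⟩ <;> exact h

/-- A `noop` tail has constantly `noop` canonical map, and `noop` is above nothing. -/
lemma tailAct_ne_noop_of_forall_CAgtF {n : ℕ} {α : Act Φ} {c : Finset Φ → Act Φ}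
    (h : ∀ a, CAgtF n (cmap (tailAct α) a) (c a)) : tailAct α ≠ .noop := by
  intro hα
  have h₀ := h ∅
  rw [hα, cmap_noop] at h₀
  exact h₀.ne_noop rfl

lemma CAgtF.succ : ∀ {n : ℕ} {α α' : Act Φ}, CAgtF n α α' → CAgtF (n + 1) α α'
  | 0, _, _, h => h.elim
  | _ + 1, _, _, h => by
    rcases h with h | ⟨hα, hα', hs | ht | ⟨hA, hc⟩⟩
    · exact Or.inl h
    · exact Or.inr ⟨hα, hα', Or.inl hs⟩
    · exact Or.inr ⟨hα, hα', Or.inr (Or.inl ht)⟩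
    · exact Or.inr ⟨hα, hα', Or.inr (Or.inr ⟨hA, fun a => (hc a).succ⟩)⟩

lemma CAgtF.mono {n m : ℕ} {α α' : Act Φ} (hnm : n ≤ m) (h : CAgtF n α α') :
    CAgtF m α α' :=
  monotone_nat_of_le_succ (f := fun n => CAgtF n α α') (fun _ => CAgtF.succ) hnm h

lemma CAgtF_irrefl : ∀ (n : ℕ) (α : Act Φ), ¬ CAgtF n α α
  | 0, _, h => h
  | n + 1, _, h => by
    rcases h with ⟨hα, hα'⟩ | ⟨-, -, hs | ⟨-, ht, ht'⟩ | ⟨-, hc⟩⟩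
    · exact hα hα'
    · exact ssubset_irrefl _ hs
    · exact ht ht'
    · exact CAgtF_irrefl n _ (hc ∅)

lemma CAgtF_trans : ∀ {n : ℕ} {α β γ : Act Φ},
    CAgtF n α β → CAgtF n β γ → CAgtF n α γ
  | 0, _, _, _, h, _ => h.elim
  | n + 1, α, β, γ, hab, hbc => by
    have hα : α ≠ .noop := hab.ne_noop
    rcases hbc with ⟨-, hγ⟩ | ⟨hβ, hγ, hbc⟩
    · exact Or.inl ⟨hα, hγ⟩
    rcases hab with ⟨-, hβ'⟩ | ⟨-, -, hab⟩
    · exact absurd hβ' hβ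
    refine Or.inr ⟨hα, hγ, ?_⟩
    rcases hab with hab | ⟨hAB, -, htβ⟩ | ⟨hAB, hab⟩ <;>
      rcases hbc with hbc | ⟨hBC, htβ', htγ⟩ | ⟨hBC, hbc⟩
    · exact Or.inl (hbc.trans hab)
    · exact Or.inl (hBC ▸ hab)
    · exact Or.inl (hBC ▸ hab)
    · exact Or.inl (hAB ▸ hbc)
    · exact absurd htβ htβ'
    · exact absurd htβ (tailAct_ne_noop_of_forall_CAgtF hbc)
    · exact Or.inl (hAB ▸ hbc)
    · exact Or.inr (Or.inl ⟨hAB.trans hBC, tailAct_ne_noop_of_forall_CAgtF hab, htγ⟩)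
    · exact Or.inr (Or.inr ⟨hAB.trans hBC, fun a => CAgtF_trans (hab a) (hbc a)⟩)

lemma CAgt_irrefl (α : Act Φ) : ¬ CAgt α α :=
  fun ⟨n, h⟩ => CAgtF_irrefl n α h

lemma CAgt_trans {α β γ : Act Φ} : CAgt α β → CAgt β γ → CAgt α γ
  | ⟨n, hab⟩, ⟨m, hbc⟩ =>
    ⟨max n m, CAgtF_trans (hab.mono (le_max_left n m)) (hbc.mono (le_max_right n m))⟩

end StrictOrder

/-- `⊐` is a strict partial order (irreflexive and transitive) on `CA^{k,-}`. -/
theorem CAgt_strict_partial_order {Φ : Type} [Fintype Φ] [DecidableEq Φ]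
    (F : Finset (Form Φ)) (k : ℕ) :
    (∀ α ∈ CAminusI F k, ¬ CAgt α α) ∧
    (∀ α β γ : Act Φ, α ∈ CAminusI F k → β ∈ CAminusI F k → γ ∈ CAminusI F k →
      CAgt α β → CAgt β γ → CAgt α γ) :=
  ⟨fun α _ => CAgt_irrefl α, fun _ _ _ _ _ _ => CAgt_trans⟩

end
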